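/- arXiv:2605.01174 — 2 statements merged into one kernel-verified Lean document; each statement's English description precedes it below -/
import Mathlib

section
/- Let R = ℤ[w,c,i,j,k]/(w²−8w, wc−4w, wi−2w, wj−2w, wk−2w, c²−4c, ci−2c, cj−2c, ck−2c, i²−2i, j²−2j, k²−2k, ij−c, ik−c, jk−c), and let g₁ = −2w + 3i + 3j + 3k − 2, g₂ = w − 2c, g₃ = −w + 3c − 2i, g₄ = −w + 3c − 2j, g₅ = −w + 3c − 2k. Then the ideal of R generated by g₁,…,g₅ coincides with the additive subgroup of R generated by g₁,…,g₅. -/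
open MvPolynomial

noncomputable section

/-- Presentation of the Burnside ring `A(Q₈)`:
variables `X 0 = w`, `X 1 = c`, `X 2 = i`, `X 3 = j`, `X 4 = k`. -/
def relR : Ideal (MvPolynomial (Fin 5) ℤ) :=
  Ideal.span {X 0 ^ 2 - 8 * X 0, X 0 * X 1 - 4 * X 0, X 0 * X 2 - 2 * X 0,
    X 0 * X 3 - 2 * X 0, X 0 * X 4 - 2 * X 0,
    X 1 ^ 2 - 4 * X 1, X 1 * X 2 - 2 * X 1, X 1 * X 3 - 2 * X 1, X 1 * X 4 - 2 * X 1,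
    X 2 ^ 2 - 2 * X 2, X 3 ^ 2 - 2 * X 3, X 4 ^ 2 - 2 * X 4,
    X 2 * X 3 - X 1, X 2 * X 4 - X 1, X 3 * X 4 - X 1}

abbrev R : Type := MvPolynomial (Fin 5) ℤ ⧸ relR

def wR : R := Ideal.Quotient.mk relR (X 0)
def cR : R := Ideal.Quotient.mk relR (X 1)
def iR : R := Ideal.Quotient.mk relR (X 2)
def jR : R := Ideal.Quotient.mk relR (X 3)
def kR : R := Ideal.Quotient.mk relR (X 4)

def g1 : R := -2 * wR + 3 * iR + 3 * jR + 3 * kR - 2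
def g2 : R := wR - 2 * cR
def g3 : R := -wR + 3 * cR - 2 * iR
def g4 : R := -wR + 3 * cR - 2 * jR
def g5 : R := -wR + 3 * cR - 2 * kR

section Rels

lemma relzero (p : MvPolynomial (Fin 5) ℤ)
    (h : p ∈ ({X 0 ^ 2 - 8 * X 0, X 0 * X 1 - 4 * X 0, X 0 * X 2 - 2 * X 0,
    X 0 * X 3 - 2 * X 0, X 0 * X 4 - 2 * X 0,
    X 1 ^ 2 - 4 * X 1, X 1 * X 2 - 2 * X 1, X 1 * X 3 - 2 * X 1, X 1 * X 4 - 2 * X 1,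
    X 2 ^ 2 - 2 * X 2, X 3 ^ 2 - 2 * X 3, X 4 ^ 2 - 2 * X 4,
    X 2 * X 3 - X 1, X 2 * X 4 - X 1, X 3 * X 4 - X 1} : Set (MvPolynomial (Fin 5) ℤ))) :
    Ideal.Quotient.mk relR p = 0 :=
  Ideal.Quotient.eq_zero_iff_mem.mpr (Ideal.subset_span h)

lemma rww : wR * wR = 8 * wR := by
  have h2 := relzero (X 0 ^ 2 - 8 * X 0) (by simp)
  simp only [map_sub, map_mul, map_pow, map_ofNat] at h2
  unfold wR; linear_combination h2

lemma rwc : wR * cR = 4 * wR := by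
  have h2 := relzero (X 0 * X 1 - 4 * X 0) (by simp)
  simp only [map_sub, map_mul, map_pow, map_ofNat] at h2
  unfold wR cR; linear_combination h2

lemma rwi : wR * iR = 2 * wR := by
  have h2 := relzero (X 0 * X 2 - 2 * X 0) (by simp)
  simp only [map_sub, map_mul, map_pow, map_ofNat] at h2
  unfold wR iR; linear_combination h2

lemma rwj : wR * jR = 2 * wR := by
  have h2 := relzero (X 0 * X 3 - 2 * X 0) (by simp)
  simp only [map_sub, map_mul, map_pow, map_ofNat] at h2
  unfold wR jR; linear_combination h2

lemma rwk : wR * kR = 2 * wR := by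
  have h2 := relzero (X 0 * X 4 - 2 * X 0) (by simp)
  simp only [map_sub, map_mul, map_pow, map_ofNat] at h2
  unfold wR kR; linear_combination h2

lemma rcc : cR * cR = 4 * cR := by
  have h2 := relzero (X 1 ^ 2 - 4 * X 1) (by simp)
  simp only [map_sub, map_mul, map_pow, map_ofNat] at h2
  unfold cR; linear_combination h2

lemma rci : cR * iR = 2 * cR := by
  have h2 := relzero (X 1 * X 2 - 2 * X 1) (by simp)
  simp only [map_sub, map_mul, map_pow, map_ofNat] at h2
  unfold cR iR; linear_combination h2

lemma rcj : cR * jR = 2 * cR := by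
  have h2 := relzero (X 1 * X 3 - 2 * X 1) (by simp)
  simp only [map_sub, map_mul, map_pow, map_ofNat] at h2
  unfold cR jR; linear_combination h2

lemma rck : cR * kR = 2 * cR := by
  have h2 := relzero (X 1 * X 4 - 2 * X 1) (by simp)
  simp only [map_sub, map_mul, map_pow, map_ofNat] at h2
  unfold cR kR; linear_combination h2

lemma rii : iR * iR = 2 * iR := by
  have h2 := relzero (X 2 ^ 2 - 2 * X 2) (by simp)
  simp only [map_sub, map_mul, map_pow, map_ofNat] at h2
  unfold iR; linear_combination h2

lemma rjj : jR * jR = 2 * jR := by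
  have h2 := relzero (X 3 ^ 2 - 2 * X 3) (by simp)
  simp only [map_sub, map_mul, map_pow, map_ofNat] at h2
  unfold jR; linear_combination h2

lemma rkk : kR * kR = 2 * kR := by
  have h2 := relzero (X 4 ^ 2 - 2 * X 4) (by simp)
  simp only [map_sub, map_mul, map_pow, map_ofNat] at h2
  unfold kR; linear_combination h2

lemma rij : iR * jR = cR := by
  have h2 := relzero (X 2 * X 3 - X 1) (by simp)
  simp only [map_sub, map_mul, map_pow, map_ofNat] at h2
  unfold iR jR cR; linear_combination h2

lemma rik : iR * kR = cR := by
  have h2 := relzero (X 2 * X 4 - X 1) (by simp)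
  simp only [map_sub, map_mul, map_pow, map_ofNat] at h2
  unfold iR kR cR; linear_combination h2

lemma rjk : jR * kR = cR := by
  have h2 := relzero (X 3 * X 4 - X 1) (by simp)
  simp only [map_sub, map_mul, map_pow, map_ofNat] at h2
  unfold jR kR cR; linear_combination h2

end Rels

section Products

lemma pwg1 : wR * g1 = 0 := by
  unfold g1; linear_combination (-2 : R) * rww + 3 * rwi + 3 * rwj + 3 * rwk
lemma pwg2 : wR * g2 = 0 := by
  unfold g2; linear_combination rww - 2 * rwc
lemma pwg3 : wR * g3 = 0 := by
  unfold g3; linear_combination -rww + 3 * rwc - 2 * rwi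
lemma pwg4 : wR * g4 = 0 := by
  unfold g4; linear_combination -rww + 3 * rwc - 2 * rwj
lemma pwg5 : wR * g5 = 0 := by
  unfold g5; linear_combination -rww + 3 * rwc - 2 * rwk

lemma pcg1 : cR * g1 = (-8 : ℤ) • g2 := by
  unfold g1 g2; simp only [zsmul_eq_mul]; push_cast
  linear_combination (-2 : R) * rwc + 3 * rci + 3 * rcj + 3 * rck
lemma pcg2 : cR * g2 = (4 : ℤ) • g2 := by
  unfold g2; simp only [zsmul_eq_mul]; push_cast
  linear_combination rwc - 2 * rcc
lemma pcg3 : cR * g3 = (-4 : ℤ) • g2 := by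
  unfold g2 g3; simp only [zsmul_eq_mul]; push_cast
  linear_combination -rwc + 3 * rcc - 2 * rci
lemma pcg4 : cR * g4 = (-4 : ℤ) • g2 := by
  unfold g2 g4; simp only [zsmul_eq_mul]; push_cast
  linear_combination -rwc + 3 * rcc - 2 * rcj
lemma pcg5 : cR * g5 = (-4 : ℤ) • g2 := by
  unfold g2 g5; simp only [zsmul_eq_mul]; push_cast
  linear_combination -rwc + 3 * rcc - 2 * rck

lemma pig1 : iR * g1 = (-6 : ℤ) • g2 + (-2 : ℤ) • g3 := by
  unfold g1 g2 g3; simp only [zsmul_eq_mul]; push_cast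
  linear_combination (-2 : R) * rwi + 3 * rii + 3 * rij + 3 * rik
lemma pig2 : iR * g2 = (2 : ℤ) • g2 := by
  unfold g2; simp only [zsmul_eq_mul]; push_cast
  linear_combination rwi - 2 * rci
lemma pig3 : iR * g3 = (2 : ℤ) • g3 := by
  unfold g3; simp only [zsmul_eq_mul]; push_cast
  linear_combination -rwi + 3 * rci - 2 * rii
lemma pig4 : iR * g4 = (-2 : ℤ) • g2 := by
  unfold g2 g4; simp only [zsmul_eq_mul]; push_cast
  linear_combination -rwi + 3 * rci - 2 * rij
lemma pig5 : iR * g5 = (-2 : ℤ) • g2 := by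
  unfold g2 g5; simp only [zsmul_eq_mul]; push_cast
  linear_combination -rwi + 3 * rci - 2 * rik

lemma pjg1 : jR * g1 = (-6 : ℤ) • g2 + (-2 : ℤ) • g4 := by
  unfold g1 g2 g4; simp only [zsmul_eq_mul]; push_cast
  linear_combination (-2 : R) * rwj + 3 * rij + 3 * rjj + 3 * rjk
lemma pjg2 : jR * g2 = (2 : ℤ) • g2 := by
  unfold g2; simp only [zsmul_eq_mul]; push_cast
  linear_combination rwj - 2 * rcj
lemma pjg3 : jR * g3 = (-2 : ℤ) • g2 := by
  unfold g2 g3; simp only [zsmul_eq_mul]; push_cast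
  linear_combination -rwj + 3 * rcj - 2 * rij
lemma pjg4 : jR * g4 = (2 : ℤ) • g4 := by
  unfold g4; simp only [zsmul_eq_mul]; push_cast
  linear_combination -rwj + 3 * rcj - 2 * rjj
lemma pjg5 : jR * g5 = (-2 : ℤ) • g2 := by
  unfold g2 g5; simp only [zsmul_eq_mul]; push_cast
  linear_combination -rwj + 3 * rcj - 2 * rjk

lemma pkg1 : kR * g1 = (-6 : ℤ) • g2 + (-2 : ℤ) • g5 := by
  unfold g1 g2 g5; simp only [zsmul_eq_mul]; push_cast
  linear_combination (-2 : R) * rwk + 3 * rik + 3 * rjk + 3 * rkk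
lemma pkg2 : kR * g2 = (2 : ℤ) • g2 := by
  unfold g2; simp only [zsmul_eq_mul]; push_cast
  linear_combination rwk - 2 * rck
lemma pkg3 : kR * g3 = (-2 : ℤ) • g2 := by
  unfold g2 g3; simp only [zsmul_eq_mul]; push_cast
  linear_combination -rwk + 3 * rck - 2 * rik
lemma pkg4 : kR * g4 = (-2 : ℤ) • g2 := by
  unfold g2 g4; simp only [zsmul_eq_mul]; push_cast
  linear_combination -rwk + 3 * rck - 2 * rjk
lemma pkg5 : kR * g5 = (2 : ℤ) • g5 := by
  unfold g5; simp only [zsmul_eq_mul]; push_cast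
  linear_combination -rwk + 3 * rck - 2 * rkk

end Products

abbrev Sgen : Set R := {g1, g2, g3, g4, g5}
abbrev H : AddSubgroup R := AddSubgroup.closure Sgen

lemma hg1 : g1 ∈ H := AddSubgroup.subset_closure (by simp [Sgen])
lemma hg2 : g2 ∈ H := AddSubgroup.subset_closure (by simp [Sgen])
lemma hg3 : g3 ∈ H := AddSubgroup.subset_closure (by simp [Sgen])
lemma hg4 : g4 ∈ H := AddSubgroup.subset_closure (by simp [Sgen])
lemma hg5 : g5 ∈ H := AddSubgroup.subset_closure (by simp [Sgen])

/-- Multiplying an element of `H` by a variable stays in `H`. -/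
lemma var_mul_mem (n : Fin 5) {x : R} (hx : x ∈ H) :
    Ideal.Quotient.mk relR (X n) * x ∈ H := by
  induction hx using AddSubgroup.closure_induction with
  | mem s hs =>
    fin_cases n <;>
      rcases hs with rfl | rfl | rfl | rfl | rfl
    · show wR * _ ∈ H
      rw [pwg1]; exact H.zero_mem
    · show wR * _ ∈ H
      rw [pwg2]; exact H.zero_mem
    · show wR * _ ∈ H
      rw [pwg3]; exact H.zero_mem
    · show wR * _ ∈ H
      rw [pwg4]; exact H.zero_mem
    · show wR * _ ∈ H
      rw [pwg5]; exact H.zero_mem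
    · show cR * _ ∈ H
      rw [pcg1]
      exact H.zsmul_mem hg2 _
    · show cR * _ ∈ H
      rw [pcg2]
      exact H.zsmul_mem hg2 _
    · show cR * _ ∈ H
      rw [pcg3]
      exact H.zsmul_mem hg2 _
    · show cR * _ ∈ H
      rw [pcg4]
      exact H.zsmul_mem hg2 _
    · show cR * _ ∈ H
      rw [pcg5]
      exact H.zsmul_mem hg2 _
    · show iR * _ ∈ H
      rw [pig1]
      exact H.add_mem (H.zsmul_mem hg2 _) (H.zsmul_mem hg3 _)
    · show iR * _ ∈ H
      rw [pig2]
      exact H.zsmul_mem hg2 _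
    · show iR * _ ∈ H
      rw [pig3]
      exact H.zsmul_mem hg3 _
    · show iR * _ ∈ H
      rw [pig4]
      exact H.zsmul_mem hg2 _
    · show iR * _ ∈ H
      rw [pig5]
      exact H.zsmul_mem hg2 _
    · show jR * _ ∈ H
      rw [pjg1]
      exact H.add_mem (H.zsmul_mem hg2 _) (H.zsmul_mem hg4 _)
    · show jR * _ ∈ H
      rw [pjg2]
      exact H.zsmul_mem hg2 _
    · show jR * _ ∈ H
      rw [pjg3]
      exact H.zsmul_mem hg2 _
    · show jR * _ ∈ H
      rw [pjg4]
      exact H.zsmul_mem hg4 _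
    · show jR * _ ∈ H
      rw [pjg5]
      exact H.zsmul_mem hg2 _
    · show kR * _ ∈ H
      rw [pkg1]
      exact H.add_mem (H.zsmul_mem hg2 _) (H.zsmul_mem hg5 _)
    · show kR * _ ∈ H
      rw [pkg2]
      exact H.zsmul_mem hg2 _
    · show kR * _ ∈ H
      rw [pkg3]
      exact H.zsmul_mem hg2 _
    · show kR * _ ∈ H
      rw [pkg4]
      exact H.zsmul_mem hg2 _
    · show kR * _ ∈ H
      rw [pkg5]
      exact H.zsmul_mem hg5 _
  | zero => simpa using H.zero_mem
  | add a b _ _ ha hb => rw [mul_add]; exact H.add_mem ha hb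
  | neg a _ ha =>
    rw [show (Ideal.Quotient.mk relR) (X n) * -a = -((Ideal.Quotient.mk relR) (X n) * a) from by ring]
    exact H.neg_mem ha

lemma mul_mem_H (r : R) {x : R} (hx : x ∈ H) : r * x ∈ H := by
  obtain ⟨p, rfl⟩ := Ideal.Quotient.mk_surjective r
  induction p using MvPolynomial.induction_on generalizing x with
  | C a =>
    have hC : (Ideal.Quotient.mk relR) (C a) = (a : R) := by
      have : (C a : MvPolynomial (Fin 5) ℤ) = (a : MvPolynomial (Fin 5) ℤ) := by
        simp
      rw [this, map_intCast]
    rw [hC, ← zsmul_eq_mul]; exact H.zsmul_mem hx _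
  | add p q hp hq =>
    rw [map_add, add_mul]; exact H.add_mem (hp hx) (hq hx)
  | mul_X p n hp =>
    rw [map_mul, mul_assoc]
    exact hp (var_mul_mem n hx)

theorem stmt7 :
    (Ideal.span ({g1, g2, g3, g4, g5} : Set R) : Set R) =
      (AddSubgroup.closure ({g1, g2, g3, g4, g5} : Set R) : Set R) := by
  ext a
  constructor
  · intro ha
    have ha' : a ∈ Ideal.span ({g1, g2, g3, g4, g5} : Set R) := ha
    clear ha
    induction ha' using Submodule.span_induction with
    | mem s hs => exact AddSubgroup.subset_closure hs
    | zero => exact H.zero_mem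
    | add x y _ _ hx hy => exact H.add_mem hx hy
    | smul r x _ hx => exact mul_mem_H r hx
  · intro ha
    have ha' : a ∈ H := ha
    clear ha
    have : a ∈ Ideal.span ({g1, g2, g3, g4, g5} : Set R) := by
      induction ha' using AddSubgroup.closure_induction with
      | mem s hs => exact Ideal.subset_span hs
      | zero => exact Submodule.zero_mem _
      | add x y _ _ hx hy => exact Submodule.add_mem _ hx hy
      | neg x _ hx => exact Submodule.neg_mem _ hx
    exact this
end
end

section
/- Let Q₈ = QuaternionGroup 2 be the quaternion group of order 8, with elements a i (i : ZMod 4) and xa i, and let I = Subgroup.zpowers (a 1), a cyclic subgroup of order 4. Let X = I be the I-set given by left multiplication of I on itself. Consider the coinduced Q₈-set Coind_I^{Q₈} X = {f : Q₈ → X | f(h·g) = h·f(g) for all h ∈ I, g ∈ Q₈} with Q₈-action (g·f)(g') = f(g'·g). Then Coind_I^{Q₈} X is a free Q₈-set with exactly two orbits; that is, there is a Q₈-equivariant bijection from Coind_I^{Q₈} X to the disjoint union of two copies of Q₈ with left translation. -/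
open QuaternionGroup

/-- The coinduced `G`-set of an `H`-set `X` (where the `H`-action on `X` is given by
`sm`): the set of functions `f : G → X` with `f (h * g) = h • f g` for all `h ∈ H`,
`g ∈ G`. -/
structure CoindSet (G : Type*) [Group G] (H : Subgroup G) (X : Type*)
    (sm : H → X → X) where
  toFun : G → X
  compat : ∀ (h : H) (g : G), toFun (↑h * g) = sm h (toFun g)

/-- The `G`-action on the coinduced set: `(g • f) g' = f (g' * g)`. -/
def coindAct {G : Type*} [Group G] {H : Subgroup G} {X : Type*} {sm : H → X → X}
    (g : G) (f : CoindSet G H X sm) : CoindSet G H X sm where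
  toFun := fun g' => f.toFun (g' * g)
  compat := by
    intro h g'
    show f.toFun (↑h * g' * g) = sm h (f.toFun (g' * g))
    rw [mul_assoc]
    exact f.compat h (g' * g)

/-- The cyclic subgroup `I = ⟨a 1⟩` of order 4 in `Q₈`. -/
def I : Subgroup (QuaternionGroup 2) := Subgroup.zpowers (a 1)


-- auxiliary
def τ (m : ZMod 4) : I :=
  ⟨a m, ⟨(m.val : ℤ), by
    show (a 1 : QuaternionGroup 2) ^ ((m.val : ℤ)) = a m
    rw [zpow_natCast, a_one_pow]
    congr 1
    simp [ZMod.natCast_val, ZMod.cast_id]⟩⟩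

def κ (x : I) : ZMod 4 :=
  match (x : QuaternionGroup 2) with
  | a i => i
  | xa i => i

@[simp] lemma coe_τ (m : ZMod 4) : ((τ m : I) : QuaternionGroup 2) = a m := rfl

@[simp] lemma κ_τ (m : ZMod 4) : κ (τ m) = m := rfl

lemma coe_eq_a (x : I) : (x : QuaternionGroup 2) = a (κ x) := by
  obtain ⟨g, hg⟩ := x
  obtain ⟨k, hk⟩ := hg
  cases g with
  | a i => rfl
  | xa i =>
      exfalso
      have h1 : (a 1 : QuaternionGroup 2) ^ k = xa i := hk
      rcases k with n | n
      · rw [show ((Int.ofNat n : ℤ)) = (n:ℤ) from rfl, zpow_natCast, a_one_pow] at h1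
        exact nomatch h1
      · rw [zpow_negSucc, a_one_pow] at h1
        have h2 : ((a ((n+1:ℕ)) : QuaternionGroup 2))⁻¹ = a (-((n+1:ℕ) : ZMod (2*2))) := rfl
        rw [h2] at h1
        exact nomatch h1

@[simp] lemma τ_κ (x : I) : τ (κ x) = x := by
  apply Subtype.ext
  rw [coe_τ, ← coe_eq_a]

@[simp] lemma mul_τ (i j : ZMod 4) : τ i * τ j = τ (i + j) := by
  apply Subtype.ext
  rw [MulMemClass.coe_mul, coe_τ, coe_τ, coe_τ]
  rfl

lemma CoindSet.ext' {G : Type*} [Group G] {H : Subgroup G} {X : Type*}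
    {sm : H → X → X} {f g : CoindSet G H X sm} (h : f.toFun = g.toFun) : f = g := by
  cases f; cases g; simpa using h

abbrev Coind := CoindSet (QuaternionGroup 2) I I (fun h x => h * x)

lemma coind_a (f : Coind) (i : ZMod 4) : f.toFun (a i) = τ i * f.toFun 1 := by
  have h := f.compat (τ i) 1
  simpa using h

lemma coind_xa (f : Coind) (i : ZMod 4) :
    f.toFun (xa i) = τ (-i) * f.toFun (xa 0) := by
  have h := f.compat (τ (-i)) (xa 0)
  have h2 : ((τ (-i) : I) : QuaternionGroup 2) * xa 0 = xa i := by
    rw [coe_τ, a_mul_xa]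
    congr 1
    simp
  rw [h2] at h
  exact h

def pairCoind (u v : I) : Coind where
  toFun := fun g =>
    match g with
    | a i => τ i * u
    | xa i => τ (-i) * v
  compat := by
    intro h g
    have hc : (h : QuaternionGroup 2) = a (κ h) := coe_eq_a h
    have hh : h = τ (κ h) := (τ_κ h).symm
    cases g with
    | a i =>
        rw [hc]
        show τ (κ h + i) * u = h * (τ i * u)
        conv_rhs => rw [hh]
        rw [← mul_assoc, mul_τ]
    | xa i =>
        rw [hc]
        show τ (-(i - κ h)) * v = h * (τ (-i) * v)
        conv_rhs => rw [hh]
        rw [← mul_assoc, mul_τ]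
        congr 2
        ring

@[simp] lemma pairCoind_a (u v : I) (i : ZMod 4) :
    (pairCoind u v).toFun (a i) = τ i * u := rfl

@[simp] lemma pairCoind_xa (u v : I) (i : ZMod 4) :
    (pairCoind u v).toFun (xa i) = τ (-i) * v := rfl

lemma eq_pairCoind (f : Coind) : f = pairCoind (f.toFun 1) (f.toFun (xa 0)) := by
  apply CoindSet.ext'
  funext g
  cases g with
  | a i => rw [coind_a]; rfl
  | xa i => rw [coind_xa]; rfl

def eFun (f : Coind) : QuaternionGroup 2 ⊕ QuaternionGroup 2 :=
  let u := f.toFun 1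
  let v := f.toFun (xa 0)
  if κ u + κ v = 0 then .inl (a (κ u))
  else if κ u + κ v = 2 then .inl (xa (-(κ u)))
  else if κ u + κ v = 1 then .inr (a (κ u))
  else .inr (xa (1 - κ u))

def eInv : QuaternionGroup 2 ⊕ QuaternionGroup 2 → Coind
  | .inl (a m) => pairCoind (τ m) (τ (-m))
  | .inl (xa m) => pairCoind (τ (-m)) (τ (2 + m))
  | .inr (a m) => pairCoind (τ m) (τ (1 - m))
  | .inr (xa m) => pairCoind (τ (1 - m)) (τ (2 + m))

lemma zmod4_cases (s : ZMod 4) : s = 0 ∨ s = 1 ∨ s = 2 ∨ s = 3 := by revert s; decide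

lemma eFun_pair (u v : I) : eFun (pairCoind u v) =
    if κ u + κ v = 0 then .inl (a (κ u))
    else if κ u + κ v = 2 then .inl (xa (-(κ u)))
    else if κ u + κ v = 1 then .inr (a (κ u))
    else .inr (xa (1 - κ u)) := by
  have h1 : (pairCoind u v).toFun 1 = u := by
    rw [one_def, pairCoind_a]
    show τ 0 * u = u
    have : τ 0 = 1 := rfl
    rw [this, one_mul]
  have h2 : (pairCoind u v).toFun (xa 0) = v := by
    rw [pairCoind_xa]
    show τ (-0) * v = v
    have : τ (-0 : ZMod 4) = 1 := rfl
    rw [this, one_mul]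
  rw [eFun]
  simp only [h1, h2]

lemma right_inv' : ∀ s, eFun (eInv s) = s := by
  rintro ((m | m) | (m | m)) <;> rw [eInv, eFun_pair] <;> rw [κ_τ, κ_τ]
  · have hs : m + -m = 0 := by ring
    rw [if_pos hs]
  · have hs : -m + (2 + m) = 2 := by ring
    rw [hs, if_neg (by decide), if_pos rfl, neg_neg]
  · have hs : m + (1 - m) = 1 := by ring
    rw [hs, if_neg (by decide), if_neg (by decide), if_pos rfl]
  · have hs : (1 - m) + (2 + m) = 3 := by ring
    rw [hs, if_neg (by decide), if_neg (by decide), if_neg (by decide)]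
    congr 1
    ring

lemma key_inv (u v : I) : eInv (eFun (pairCoind u v)) = pairCoind u v := by
  rw [eFun_pair]
  rcases zmod4_cases (κ u + κ v) with hs | hs | hs | hs
  · rw [if_pos hs]
    have hκv : κ v = -κ u := by linear_combination hs
    rw [eInv, ← hκv, τ_κ, τ_κ]
  · rw [if_neg (by rw [hs]; decide), if_neg (by rw [hs]; decide), if_pos hs]
    have hκv : κ v = 1 - κ u := by linear_combination hs
    rw [eInv, ← hκv, τ_κ, τ_κ]
  · rw [if_neg (by rw [hs]; decide), if_pos hs]
    have hκv : κ v = 2 + -κ u := by linear_combination hs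
    rw [eInv, neg_neg]
    rw [show (2 : ZMod 4) + -κ u = κ v from hκv.symm, τ_κ, τ_κ]
  · rw [if_neg (by rw [hs]; decide), if_neg (by rw [hs]; decide),
      if_neg (by rw [hs]; decide)]
    have h1 : (1 : ZMod 4) - (1 - κ u) = κ u := by ring
    have h2 : (2 : ZMod 4) + (1 - κ u) = κ v := by linear_combination -hs
    rw [eInv, h1, h2, τ_κ, τ_κ]

lemma left_inv' : ∀ f, eInv (eFun f) = f := by
  intro f
  have h := key_inv (f.toFun 1) (f.toFun (xa 0))
  rw [← eq_pairCoind f] at h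
  exact h

lemma coindAct_pair (g : QuaternionGroup 2) (F : Coind) :
    coindAct g F = pairCoind (F.toFun g) (F.toFun (xa 0 * g)) := by
  have h := eq_pairCoind (coindAct g F)
  simpa [coindAct, one_mul] using h

lemma equiv_key (g : QuaternionGroup 2) (p q : ZMod 4) :
    eFun (coindAct g (pairCoind (τ p) (τ q))) =
      Sum.map (fun g' => g * g') (fun g' => g * g')
        (eFun (pairCoind (τ p) (τ q))) := by
  rw [coindAct_pair]
  have n0 : ¬ (1:ZMod 4) = 0 := by decide
  have n2 : ¬ (1:ZMod 4) = 2 := by decide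
  have m0 : ¬ (2:ZMod 4) = 0 := by decide
  have k0 : ¬ (3:ZMod 4) = 0 := by decide
  have k2 : ¬ (3:ZMod 4) = 2 := by decide
  have k1 : ¬ (3:ZMod 4) = 1 := by decide
  cases g with
  | a m =>
      rw [show (xa 0 * a m : QuaternionGroup 2) = xa (0 + m) from rfl,
        show (pairCoind (τ p) (τ q)).toFun (a m) = τ (m + p) from by
          rw [pairCoind_a, mul_τ],
        show (pairCoind (τ p) (τ q)).toFun (xa (0 + m)) = τ (-(0 + m) + q) from by
          rw [pairCoind_xa, mul_τ],
        eFun_pair, eFun_pair]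
      rw [κ_τ, κ_τ, κ_τ, κ_τ]
      have hc : (m + p) + (-(0 + m) + q) = p + q := by ring
      rw [hc]
      rcases zmod4_cases (p + q) with hs | hs | hs | hs <;> rw [hs]
      · rw [if_pos rfl, if_pos rfl]
        simp only [Sum.map_inl, a_mul_a]
        all_goals (congr 2 <;> first | ring | linear_combination - hs | (push_cast; linear_combination - hs) | (push_cast; linear_combination 2 * hs))
      · rw [if_neg n0, if_neg n2, if_pos rfl, if_neg n0, if_neg n2, if_pos rfl]
        simp only [Sum.map_inr, a_mul_a]
        all_goals (congr 2 <;> first | ring | linear_combination - hs | (push_cast; linear_combination - hs) | (push_cast; linear_combination 2 * hs))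
      · rw [if_neg m0, if_pos rfl, if_neg m0, if_pos rfl]
        simp only [Sum.map_inl, a_mul_xa]
        all_goals (congr 2 <;> first | ring | linear_combination - hs | (push_cast; linear_combination - hs) | (push_cast; linear_combination 2 * hs))
      · rw [if_neg k0, if_neg k2, if_neg k1, if_neg k0, if_neg k2, if_neg k1]
        simp only [Sum.map_inr, a_mul_xa]
        all_goals (congr 2 <;> first | ring | linear_combination - hs | (push_cast; linear_combination - hs) | (push_cast; linear_combination 2 * hs))
  | xa m =>
      have h0 : (xa 0 * xa m : QuaternionGroup 2) = a (2 + m) := by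
        rw [xa_mul_xa]
        congr 1
        push_cast
        ring
      rw [h0,
        show (pairCoind (τ p) (τ q)).toFun (xa m) = τ (-m + q) from by
          rw [pairCoind_xa, mul_τ],
        show (pairCoind (τ p) (τ q)).toFun (a (2 + m)) = τ (2 + m + p) from by
          rw [pairCoind_a, mul_τ],
        eFun_pair, eFun_pair]
      rw [κ_τ, κ_τ, κ_τ, κ_τ]
      have hc : (-m + q) + (2 + m + p) = (p + q) + 2 := by ring
      rw [hc]
      rcases zmod4_cases (p + q) with hs | hs | hs | hs <;> rw [hs]
      · have hq : q = 0 - p := by linear_combination hs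
        rw [show (0:ZMod 4) + 2 = 2 from by decide, if_neg m0, if_pos rfl,
          if_pos rfl]
        subst hq
        simp only [Sum.map_inl, xa_mul_a]
        all_goals (congr 2 <;> (push_cast; ring))
      · have hq : q = 1 - p := by linear_combination hs
        rw [show (1:ZMod 4) + 2 = 3 from by decide, if_neg k0, if_neg k2,
          if_neg k1, if_neg n0, if_neg n2, if_pos rfl]
        subst hq
        simp only [Sum.map_inr, xa_mul_a]
        all_goals (congr 2 <;> (push_cast; ring))
      · have hq : q = 2 - p := by linear_combination hs
        rw [show (2:ZMod 4) + 2 = 0 from by decide, if_pos rfl, if_neg m0,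
          if_pos rfl]
        subst hq
        simp only [Sum.map_inl, xa_mul_xa]
        all_goals (congr 2 <;> (push_cast; ring))
      · have hq : q = 3 - p := by linear_combination hs
        rw [show (3:ZMod 4) + 2 = 1 from by decide, if_neg n0, if_neg n2,
          if_pos rfl, if_neg k0, if_neg k2, if_neg k1]
        subst hq
        simp only [Sum.map_inr, xa_mul_xa]
        all_goals (congr 2 <;> (push_cast; ring))

/-- The coinduction to `Q₈` of the `I`-set `I` (with left multiplication) is a free
`Q₈`-set with exactly two orbits: it is `Q₈`-equivariantly bijective to the disjoint
union of two copies of `Q₈` with left translation. -/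
theorem stmt10 :
    ∃ e : CoindSet (QuaternionGroup 2) I I (fun h x => h * x) ≃
        (QuaternionGroup 2 ⊕ QuaternionGroup 2),
      ∀ (g : QuaternionGroup 2)
        (f : CoindSet (QuaternionGroup 2) I I (fun h x => h * x)),
        e (coindAct g f) = Sum.map (fun g' => g * g') (fun g' => g * g') (e f) := by
  refine ⟨⟨eFun, eInv, left_inv', right_inv'⟩, ?_⟩
  intro g f
  show eFun (coindAct g f) = Sum.map _ _ (eFun f)
  have h := equiv_key g (κ (f.toFun 1)) (κ (f.toFun (xa 0)))
  rw [τ_κ, τ_κ, ← eq_pairCoind f] at h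
  exact h
end
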